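/- For every real c > 0, one has (1/(2πi)) ∮_{|z|=1} ( |1 + √c·z|² / (1 + |1 + √c·z|²) ) / z² dz = (1/(2+c)) · Σ_{k=0}^∞ ( √c/(2+c) )^{2k+1} · (2k+1)! / (k!(k+1)!), where the series on the right converges absolutely. -/

import Mathlib

set_option maxHeartbeats 1000000
open Real

open intervalIntegral in
private lemma key_int (t : ℤ) :
    (∫ θ in (0:ℝ)..(2*π), Complex.exp (t * θ * Complex.I)) = if t = 0 then (2*π : ℂ) else 0 := by
  rcases eq_or_ne t 0 with rfl | ht
  · simp
  · rw [if_neg ht]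
    have hc : (t : ℂ) * Complex.I ≠ 0 :=
      mul_ne_zero (Int.cast_ne_zero.2 ht) Complex.I_ne_zero
    have h : ∀ θ : ℝ, (t:ℂ) * (θ:ℝ) * Complex.I = ((t:ℂ) * Complex.I) * (θ:ℝ) := fun θ => by ring
    simp_rw [h]
    rw [integral_exp_mul_complex hc]
    have h2 : ((t:ℂ) * Complex.I) * ((2*π:ℝ):ℂ) = t * (2*π*Complex.I) := by push_cast; ring
    rw [h2, Complex.exp_int_mul_two_pi_mul_I]
    simp

private lemma J_int (n : ℕ) :
    (∫ θ in (0:ℝ)..(2*π), Complex.I * Complex.exp (-((θ:ℂ)*Complex.I)) *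
        (Complex.exp ((θ:ℂ)*Complex.I) + Complex.exp (-((θ:ℂ)*Complex.I)))^n)
    = 2*(π:ℂ)*Complex.I *
        ∑ j ∈ Finset.range (n+1), if 2*j = n+1 then (n.choose j : ℂ) else 0 := by
  have hpt : ∀ θ : ℝ, Complex.I * Complex.exp (-((θ:ℂ)*Complex.I)) *
      (Complex.exp ((θ:ℂ)*Complex.I) + Complex.exp (-((θ:ℂ)*Complex.I)))^n
      = ∑ j ∈ Finset.range (n+1),
          (n.choose j : ℂ) * Complex.I * Complex.exp ((2*(j:ℤ) - n - 1 : ℤ) * (θ:ℂ) * Complex.I) := by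
    intro θ
    rw [add_pow, Finset.mul_sum]
    refine Finset.sum_congr rfl fun j hj => ?_
    have hj' : j ≤ n := Nat.lt_succ_iff.mp (Finset.mem_range.mp hj)
    calc Complex.I * Complex.exp (-((θ:ℂ)*Complex.I)) *
          (Complex.exp ((θ:ℂ)*Complex.I)^j * Complex.exp (-((θ:ℂ)*Complex.I))^(n-j) * (n.choose j : ℂ))
        = (n.choose j : ℂ) * Complex.I *
            (Complex.exp ((j:ℕ)*((θ:ℂ)*Complex.I)) *
              (Complex.exp (-((θ:ℂ)*Complex.I)) * Complex.exp (((n-j:ℕ))*(-((θ:ℂ)*Complex.I))))) := by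
          rw [← Complex.exp_nat_mul, ← Complex.exp_nat_mul]; ring
      _ = (n.choose j : ℂ) * Complex.I * Complex.exp ((2*(j:ℤ) - n - 1 : ℤ) * (θ:ℂ) * Complex.I) := by
          rw [← Complex.exp_add, ← Complex.exp_add]
          congr 1
          push_cast [Nat.cast_sub hj']
          ring
  rw [intervalIntegral.integral_congr (g := fun θ : ℝ => ∑ j ∈ Finset.range (n+1),
      (n.choose j : ℂ) * Complex.I * Complex.exp ((2*(j:ℤ) - n - 1 : ℤ) * (θ:ℂ) * Complex.I))
      (fun θ _ => hpt θ)]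
  rw [intervalIntegral.integral_finset_sum (fun j _ => (Continuous.intervalIntegrable (by fun_prop) _ _))]
  rw [Finset.mul_sum]
  refine Finset.sum_congr rfl fun j hj => ?_
  have hj' : j ≤ n := Nat.lt_succ_iff.mp (Finset.mem_range.mp hj)
  rw [mul_assoc, intervalIntegral.integral_const_mul, key_int]
  by_cases h : 2*j = n+1
  · have he : (2*(j:ℤ) - n - 1 : ℤ) = 0 := by omega
    rw [if_pos he, if_pos h]
    push_cast
    ring
  · have he : (2*(j:ℤ) - n - 1 : ℤ) ≠ 0 := by omega
    rw [if_neg he, if_neg h]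
    ring

/-- for every real `c > 0`,
`(1/(2πi)) ∮_{|z|=1} (|1 + √c·z|²/(1 + |1 + √c·z|²))/z² dz
  = (1/(2+c)) Σ_{k=0}^∞ (√c/(2+c))^{2k+1} (2k+1)!/(k!(k+1)!)`,
where the series converges absolutely (nonnegative terms). -/
theorem stmt_18 (c : ℝ) (hc : 0 < c) :
    Summable (fun k : ℕ =>
      (Real.sqrt c / (2 + c)) ^ (2 * k + 1) *
        (Nat.factorial (2 * k + 1) : ℝ) /
          ((Nat.factorial k : ℝ) * (Nat.factorial (k + 1) : ℝ))) ∧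
    (1 / (2 * Real.pi * Complex.I)) *
        (∮ z in C(0, 1),
          ((‖(1 + (Real.sqrt c : ℂ) * z)‖ ^ 2 /
              (1 + ‖(1 + (Real.sqrt c : ℂ) * z)‖ ^ 2) : ℝ) : ℂ) / z ^ 2)
      = (((1 / (2 + c)) *
          ∑' k : ℕ,
            (Real.sqrt c / (2 + c)) ^ (2 * k + 1) *
              (Nat.factorial (2 * k + 1) : ℝ) /
                ((Nat.factorial k : ℝ) * (Nat.factorial (k + 1) : ℝ)) : ℝ) : ℂ) := by
  have hb0 : 0 < Real.sqrt c := Real.sqrt_pos.2 hc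
  have hb2 : (Real.sqrt c)^2 = c := Real.sq_sqrt hc.le
  have ha0 : (0:ℝ) < 2 + c := by linarith
  have h2b : 2 * Real.sqrt c < 2 + c := by nlinarith [sq_nonneg (Real.sqrt c - 1)]
  set x : ℝ := Real.sqrt c / (2 + c) with hxdef
  have hx0 : 0 < x := div_pos hb0 ha0
  have h2x : 2 * x < 1 := by
    rw [hxdef, ← mul_div_assoc]
    exact (div_lt_one ha0).2 h2b
  -- choose identity
  have hchoose : ∀ k : ℕ, ((2*k+1).factorial : ℝ) / ((k.factorial : ℝ) * ((k+1).factorial : ℝ))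
      = ((2*k+1).choose k : ℝ) := by
    intro k
    have h := Nat.add_choose_mul_factorial_mul_factorial (k+1) k
    have h2 : (k+1)+k = 2*k+1 := by omega
    rw [h2] at h
    have h3 : (((2*k+1).choose k : ℝ)) * ((k+1).factorial : ℝ) * (k.factorial : ℝ)
        = ((2*k+1).factorial : ℝ) := by exact_mod_cast congrArg (Nat.cast : ℕ → ℝ) h
    rw [div_eq_iff (by positivity)]
    linear_combination -h3
  have hCle : ∀ n j : ℕ, ((n.choose j : ℕ) : ℝ) ≤ 2^n := by
    intro n j
    have : n.choose j ≤ 2^n := by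
      rcases le_or_gt j n with h | h
      · calc n.choose j ≤ ∑ i ∈ Finset.range (n+1), n.choose i :=
              Finset.single_le_sum (fun i _ => Nat.zero_le _) (Finset.mem_range.2 (by omega))
          _ = 2^n := Nat.sum_range_choose n
      · simp [Nat.choose_eq_zero_of_lt h]
    have h4 : ((n.choose j : ℕ) : ℝ) ≤ ((2^n : ℕ) : ℝ) := Nat.cast_le.2 this
    push_cast at h4
    exact h4
  have hs' : Summable (fun k : ℕ => x^(2*k+1) * ((2*k+1).choose k : ℝ)) := by
    have hgs : Summable (fun k : ℕ => (2*x) * ((2*x)^2)^k) :=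
      (summable_geometric_of_lt_one (by positivity) (by nlinarith)).mul_left _
    refine Summable.of_nonneg_of_le (fun k => by positivity) (fun k => ?_) hgs
    calc x^(2*k+1) * ((2*k+1).choose k : ℝ) ≤ x^(2*k+1) * 2^(2*k+1) := by
            have := hCle (2*k+1) k
            have hxp : (0:ℝ) ≤ x^(2*k+1) := by positivity
            nlinarith
        _ = (2*x)^(2*k+1) := by rw [mul_pow]; ring
        _ = (2*x) * ((2*x)^2)^k := by rw [pow_succ, pow_mul]; ring
  have hsum1 : Summable (fun k : ℕ =>
      (Real.sqrt c / (2 + c)) ^ (2 * k + 1) *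
        (Nat.factorial (2 * k + 1) : ℝ) /
          ((Nat.factorial k : ℝ) * (Nat.factorial (k + 1) : ℝ))) := by
    have he : (fun k : ℕ =>
        (Real.sqrt c / (2 + c)) ^ (2 * k + 1) * (Nat.factorial (2 * k + 1) : ℝ) /
          ((Nat.factorial k : ℝ) * (Nat.factorial (k + 1) : ℝ)))
        = fun k : ℕ => x^(2*k+1) * ((2*k+1).choose k : ℝ) := by
      funext k
      rw [mul_div_assoc, hchoose k]
    rw [he]
    exact hs'
  refine ⟨hsum1, ?_⟩
  -- ## The contour integral computation
  have hA2ne : (2+(c:ℂ)) ≠ 0 := by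
    rw [show (2 + (c:ℂ)) = ((2+c:ℝ):ℂ) by push_cast; ring]
    exact Complex.ofReal_ne_zero.2 ha0.ne'
  have hAx : (2+(c:ℂ)) * ((x:ℝ):ℂ) = ((Real.sqrt c : ℝ):ℂ) := by
    have hh : (2+c) * x = Real.sqrt c := by rw [hxdef]; field_simp
    calc (2+(c:ℂ)) * ((x:ℝ):ℂ) = (((2+c)*x : ℝ) : ℂ) := by push_cast; ring
      _ = _ := by rw [hh]
  have hGcont : ∀ n : ℕ, Continuous (fun θ : ℝ =>
      (-((2+(c:ℂ))⁻¹) * Complex.I * Complex.exp (-((θ:ℂ)*Complex.I))) *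
        (-((x:ℝ):ℂ) * (Complex.exp ((θ:ℂ)*Complex.I) + Complex.exp (-((θ:ℂ)*Complex.I))))^n) := by
    intro n; fun_prop
  set G : ℕ → C(ℝ, ℂ) := fun n => ⟨fun θ : ℝ =>
      (-((2+(c:ℂ))⁻¹) * Complex.I * Complex.exp (-((θ:ℂ)*Complex.I))) *
        (-((x:ℝ):ℂ) * (Complex.exp ((θ:ℂ)*Complex.I) + Complex.exp (-((θ:ℂ)*Complex.I))))^n,
      hGcont n⟩ with hGdef
  have hexp1 : ∀ θ : ℝ, ‖Complex.exp ((θ:ℂ)*Complex.I)‖ = 1 := fun θ => by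
    simp [Complex.norm_exp]
  have hexp2 : ∀ θ : ℝ, ‖Complex.exp (-((θ:ℂ)*Complex.I))‖ = 1 := fun θ => by
    simp [Complex.norm_exp]
  have hAnorm : ‖(2+(c:ℂ))‖ = 2 + c := by
    rw [show (2 + (c:ℂ)) = ((2+c:ℝ):ℂ) by push_cast; ring, Complex.norm_real]
    exact abs_of_pos ha0
  have hxnorm : ‖((x:ℝ):ℂ)‖ = x := by rw [Complex.norm_real]; exact abs_of_pos hx0
  have hGb : ∀ (n : ℕ) (θ : ℝ), ‖G n θ‖ ≤ (2+c)⁻¹ * (2*x)^n := by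
    intro n θ
    have h3 : ‖Complex.exp ((θ:ℂ)*Complex.I) + Complex.exp (-((θ:ℂ)*Complex.I))‖ ≤ 2 := by
      refine (norm_add_le _ _).trans ?_
      rw [hexp1 θ, hexp2 θ]; norm_num
    have hnn : (0:ℝ) ≤ ‖Complex.exp ((θ:ℂ)*Complex.I) + Complex.exp (-((θ:ℂ)*Complex.I))‖ :=
      norm_nonneg _
    have heq : ‖G n θ‖ = (2+c)⁻¹ *
        (x * ‖Complex.exp ((θ:ℂ)*Complex.I) + Complex.exp (-((θ:ℂ)*Complex.I))‖)^n := by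
      simp only [hGdef, ContinuousMap.coe_mk, norm_mul, norm_pow, norm_neg, norm_inv,
        Complex.norm_I, hAnorm, hxnorm, hexp2 θ]
      ring
    rw [heq]
    have h5 : x * ‖Complex.exp ((θ:ℂ)*Complex.I) + Complex.exp (-((θ:ℂ)*Complex.I))‖ ≤ 2*x := by
      nlinarith
    have h6 := pow_le_pow_left₀ (by positivity) h5 n
    exact mul_le_mul_of_nonneg_left h6 (by positivity)
  have hsumbound : Summable (fun n : ℕ => (2+c)⁻¹ * (2*x)^n) :=
    (summable_geometric_of_lt_one (by positivity) h2x).mul_left _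
  have hnormsum : Summable (fun n : ℕ => ‖(G n).restrict
      (⟨Set.uIcc (0:ℝ) (2*π), isCompact_uIcc⟩ : TopologicalSpace.Compacts ℝ)‖) := by
    refine Summable.of_nonneg_of_le (fun n => norm_nonneg _) (fun n => ?_) hsumbound
    refine (ContinuousMap.norm_le _ (by positivity)).2 ?_
    rintro ⟨t, ht⟩
    simpa [ContinuousMap.restrict_apply] using hGb n t
  have hswap : HasSum (fun n : ℕ => ∫ θ in (0:ℝ)..(2*π), G n θ)
      (∫ θ in (0:ℝ)..(2*π), ∑' n : ℕ, G n θ) :=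
    intervalIntegral.hasSum_intervalIntegral_of_summable_norm hnormsum
  have hGint : ∀ n : ℕ, (∫ θ in (0:ℝ)..(2*π), G n θ)
      = (-((2+(c:ℂ))⁻¹)) * (-((x:ℝ):ℂ))^n *
        (2*(π:ℂ)*Complex.I * ∑ j ∈ Finset.range (n+1), if 2*j = n+1 then (n.choose j : ℂ) else 0) := by
    intro n
    have hre : ∀ θ : ℝ, G n θ = ((-((2+(c:ℂ))⁻¹)) * (-((x:ℝ):ℂ))^n) *
        (Complex.I * Complex.exp (-((θ:ℂ)*Complex.I)) *
          (Complex.exp ((θ:ℂ)*Complex.I) + Complex.exp (-((θ:ℂ)*Complex.I)))^n) := by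
      intro θ
      simp only [hGdef, ContinuousMap.coe_mk, mul_pow]
      ring
    rw [intervalIntegral.integral_congr (fun θ _ => hre θ),
      intervalIntegral.integral_const_mul, J_int]
  have heven : ∀ k : ℕ, (∫ θ in (0:ℝ)..(2*π), G (2*k) θ) = 0 := by
    intro k
    rw [hGint (2*k)]
    have h0 : (∑ j ∈ Finset.range (2*k+1), if 2*j = 2*k+1 then ((2*k).choose j : ℂ) else 0) = 0 :=
      Finset.sum_eq_zero fun j _ => by rw [if_neg (by omega)]
    rw [h0]; ring
  have hchoose2 : ∀ k : ℕ, (2*k+1).choose (k+1) = (2*k+1).choose k := by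
    intro k
    have h := Nat.choose_symm (show k ≤ 2*k+1 by omega)
    rwa [show 2*k+1-k = k+1 from by omega] at h
  have hodd : ∀ k : ℕ, (∫ θ in (0:ℝ)..(2*π), G (2*k+1) θ)
      = (2*(π:ℂ)*Complex.I) * ((2+(c:ℂ))⁻¹ * (((x:ℝ):ℂ)^(2*k+1) * ((2*k+1).choose k : ℂ))) := by
    intro k
    rw [hGint (2*k+1)]
    have h1 : (∑ j ∈ Finset.range (2*k+1+1), if 2*j = 2*k+1+1 then ((2*k+1).choose j : ℂ) else 0)
        = ((2*k+1).choose k : ℂ) := by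
      have hcong : ∀ j ∈ Finset.range (2*k+1+1),
          (if 2*j = 2*k+1+1 then ((2*k+1).choose j : ℂ) else 0)
          = if j = k+1 then ((2*k+1).choose j : ℂ) else 0 := by
        intro j _
        by_cases h : j = k+1
        · rw [if_pos (by omega), if_pos h]
        · rw [if_neg (by omega), if_neg h]
      rw [Finset.sum_congr rfl hcong,
        Finset.sum_ite_eq' (Finset.range (2*k+1+1)) (k+1) (fun j => ((2*k+1).choose j : ℂ))]
      rw [if_pos (Finset.mem_range.2 (by omega)), hchoose2 k]
    rw [h1, Odd.neg_pow ⟨k, by ring⟩]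
    ring
  have hoddsum : Summable (fun k : ℕ => ∫ θ in (0:ℝ)..(2*π), G (2*k+1) θ) := by
    have he : (fun k : ℕ => ∫ θ in (0:ℝ)..(2*π), G (2*k+1) θ)
        = fun k : ℕ => ((2*(π:ℂ)*Complex.I) * (2+(c:ℂ))⁻¹) *
            (((x^(2*k+1) * ((2*k+1).choose k : ℝ) : ℝ)) : ℂ) := by
      funext k; rw [hodd k]; push_cast; ring
    rw [he]
    exact (Complex.summable_ofReal.2 hs').mul_left _
  have hevensum : Summable (fun k : ℕ => ∫ θ in (0:ℝ)..(2*π), G (2*k) θ) := by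
    have he : (fun k : ℕ => ∫ θ in (0:ℝ)..(2*π), G (2*k) θ) = fun _ : ℕ => (0:ℂ) := funext heven
    rw [he]; exact summable_zero
  have htsumG : (∑' n : ℕ, ∫ θ in (0:ℝ)..(2*π), G n θ)
      = (2*(π:ℂ)*Complex.I) * ((2+(c:ℂ))⁻¹ *
          ((∑' k : ℕ, x^(2*k+1) * ((2*k+1).choose k : ℝ) : ℝ) : ℂ)) := by
    have hsplit := tsum_even_add_odd (f := fun n : ℕ => ∫ θ in (0:ℝ)..(2*π), G n θ)
      hevensum hoddsum
    rw [← hsplit]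
    have h0 : (∑' k : ℕ, ∫ θ in (0:ℝ)..(2*π), G (2*k) θ) = 0 := by
      simp_rw [heven]; exact tsum_zero
    have h1 : (∑' k : ℕ, ∫ θ in (0:ℝ)..(2*π), G (2*k+1) θ)
        = (2*(π:ℂ)*Complex.I) * ((2+(c:ℂ))⁻¹ *
            ((∑' k : ℕ, x^(2*k+1) * ((2*k+1).choose k : ℝ) : ℝ) : ℂ)) := by
      have hterm : ∀ k : ℕ, (∫ θ in (0:ℝ)..(2*π), G (2*k+1) θ)
          = ((2*(π:ℂ)*Complex.I) * (2+(c:ℂ))⁻¹) *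
              (((x^(2*k+1) * ((2*k+1).choose k : ℝ) : ℝ)) : ℂ) := by
        intro k; rw [hodd k]; push_cast; ring
      rw [tsum_congr hterm, tsum_mul_left, ← Complex.ofReal_tsum]
      ring
    rw [h0, h1, zero_add]
  have hpoint : ∀ θ : ℝ, Complex.exp ((θ:ℂ)*Complex.I) * Complex.I *
      (((‖(1 + (Real.sqrt c : ℂ) * Complex.exp ((θ:ℂ)*Complex.I))‖ ^ 2 /
          (1 + ‖(1 + (Real.sqrt c : ℂ) * Complex.exp ((θ:ℂ)*Complex.I))‖ ^ 2) : ℝ) : ℂ) /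
        Complex.exp ((θ:ℂ)*Complex.I) ^ 2)
      = Complex.I * Complex.exp (-((θ:ℂ)*Complex.I)) + ∑' n : ℕ, G n θ := by
    intro θ
    set E : ℂ := Complex.exp ((θ:ℂ)*Complex.I) with hEdef
    have hEne : E ≠ 0 := Complex.exp_ne_zero _
    have hEinv : Complex.exp (-((θ:ℂ)*Complex.I)) = E⁻¹ := by rw [Complex.exp_neg]
    have hEE : E * E⁻¹ = 1 := mul_inv_cancel₀ hEne
    have hconjE : (starRingEnd ℂ) E = E⁻¹ := by
      rw [hEdef, ← Complex.exp_conj, map_mul, Complex.conj_ofReal, Complex.conj_I, mul_neg,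
        Complex.exp_neg]
    have hb2' : ((Real.sqrt c : ℝ):ℂ)^2 = (c:ℂ) := by
      rw [← Complex.ofReal_pow, hb2]
    have hN : ((‖(1 + (Real.sqrt c : ℂ) * E)‖ ^ 2 : ℝ) : ℂ)
        = (2+(c:ℂ)) * (1 + ((x:ℝ):ℂ)*(E + E⁻¹)) - 1 := by
      rw [Complex.sq_norm, ← Complex.mul_conj]
      rw [map_add, map_mul, Complex.conj_ofReal, map_one, hconjE]
      linear_combination (-(E+E⁻¹)) * hAx + (E*E⁻¹) * hb2' + (c:ℂ) * hEE
    have hnormu : ‖((x:ℝ):ℂ) * (E + E⁻¹)‖ < 1 := by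
      rw [norm_mul, hxnorm]
      have hE2 : ‖E + E⁻¹‖ ≤ 2 := by
        rw [← hEinv, hEdef]
        refine (norm_add_le _ _).trans ?_
        rw [hexp1 θ, hexp2 θ]; norm_num
      nlinarith [norm_nonneg (E + E⁻¹)]
    have h1u : (1:ℂ) + ((x:ℝ):ℂ)*(E + E⁻¹) ≠ 0 := by
      intro h
      have hu : ((x:ℝ):ℂ)*(E + E⁻¹) = -1 := by linear_combination h
      rw [hu] at hnormu
      simp at hnormu
    have htsum : (∑' n : ℕ, G n θ) = (-((2+(c:ℂ))⁻¹) * Complex.I * E⁻¹) *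
        (1 + ((x:ℝ):ℂ)*(E + E⁻¹))⁻¹ := by
      have hG : ∀ n : ℕ, G n θ = (-((2+(c:ℂ))⁻¹) * Complex.I * E⁻¹) *
          (-(((x:ℝ):ℂ) * (E + E⁻¹)))^n := by
        intro n
        simp only [hGdef, ContinuousMap.coe_mk]
        rw [hEinv, ← hEdef]
        ring
      rw [tsum_congr hG, tsum_mul_left,
        tsum_geometric_of_norm_lt_one (by rwa [norm_neg]), sub_neg_eq_add]
    rw [Complex.ofReal_div, Complex.ofReal_add, Complex.ofReal_one, hN, htsum, hEinv]
    set D : ℂ := (2+(c:ℂ)) * (1 + ((x:ℝ):ℂ)*(E + E⁻¹)) with hDdef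
    have hDne : D ≠ 0 := mul_ne_zero hA2ne h1u
    have step1 : E * Complex.I * ((D - 1)/(1 + (D-1))/E^2) = Complex.I * (D-1)/(E*D) := by
      rw [show (1:ℂ)+(D-1) = D from by ring]
      field_simp
    rw [step1]
    have hDinv : (2+(c:ℂ))⁻¹ * (1+((x:ℝ):ℂ)*(E+E⁻¹))⁻¹ * D = 1 := by
      rw [hDdef]
      calc (2+(c:ℂ))⁻¹ * (1+((x:ℝ):ℂ)*(E+E⁻¹))⁻¹ * ((2+(c:ℂ)) * (1 + ((x:ℝ):ℂ)*(E + E⁻¹)))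
          = ((2+(c:ℂ))⁻¹ * (2+(c:ℂ))) * ((1+((x:ℝ):ℂ)*(E+E⁻¹))⁻¹ * (1+((x:ℝ):ℂ)*(E+E⁻¹))) := by
            ring
        _ = 1 := by rw [inv_mul_cancel₀ hA2ne, inv_mul_cancel₀ h1u]; ring
    rw [div_eq_iff (mul_ne_zero hEne hDne)]
    linear_combination (Complex.I * ((2+(c:ℂ))⁻¹ * (1+((x:ℝ):ℂ)*(E+E⁻¹))⁻¹ * D)
      - Complex.I * D) * hEE + Complex.I * hDinv
  have h2piIne : (2*(π:ℂ)*Complex.I) ≠ 0 := by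
    simp [Real.pi_ne_zero, Complex.I_ne_zero, Complex.ofReal_ne_zero]
  have hintw : IntervalIntegrable (fun θ : ℝ => Complex.I * Complex.exp (-((θ:ℂ)*Complex.I)))
      MeasureTheory.volume 0 (2*π) := Continuous.intervalIntegrable (by fun_prop) _ _
  have hconts : Continuous (fun θ : ℝ => ∑' n : ℕ, G n θ) :=
    continuous_tsum (fun n => (G n).continuous) hsumbound (fun n θ => hGb n θ)
  have hintS : IntervalIntegrable (fun θ : ℝ => ∑' n : ℕ, G n θ) MeasureTheory.volume 0 (2*π) :=
    hconts.intervalIntegrable _ _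
  have hIw : (∫ θ in (0:ℝ)..(2*π), Complex.I * Complex.exp (-((θ:ℂ)*Complex.I))) = 0 := by
    have hh : ∀ θ : ℝ, Complex.I * Complex.exp (-((θ:ℂ)*Complex.I))
        = Complex.I * Complex.exp (((-1:ℤ):ℂ) * (θ:ℂ) * Complex.I) := by
      intro θ
      have : -((θ:ℂ)*Complex.I) = ((-1:ℤ):ℂ) * (θ:ℂ) * Complex.I := by push_cast; ring
      rw [this]
    rw [intervalIntegral.integral_congr (fun θ _ => hh θ),
      intervalIntegral.integral_const_mul, key_int]
    norm_num
  have hmain : (∮ z in C(0, 1),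
      ((‖(1 + (Real.sqrt c : ℂ) * z)‖ ^ 2 /
          (1 + ‖(1 + (Real.sqrt c : ℂ) * z)‖ ^ 2) : ℝ) : ℂ) / z ^ 2)
      = (2*(π:ℂ)*Complex.I) * ((2+(c:ℂ))⁻¹ *
          ((∑' k : ℕ, x^(2*k+1) * ((2*k+1).choose k : ℝ) : ℝ) : ℂ)) := by
    rw [circleIntegral]
    simp only [deriv_circleMap, circleMap, Complex.ofReal_one, one_mul, zero_add, smul_eq_mul]
    rw [intervalIntegral.integral_congr (fun θ _ => hpoint θ)]
    rw [intervalIntegral.integral_add hintw hintS]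
    rw [hIw, ← hswap.tsum_eq, htsumG, zero_add]
  rw [hmain]
  have hts : (∑' k : ℕ, x ^ (2 * k + 1) * (Nat.factorial (2 * k + 1) : ℝ) /
        ((Nat.factorial k : ℝ) * (Nat.factorial (k + 1) : ℝ)))
      = ∑' k : ℕ, x^(2*k+1) * ((2*k+1).choose k : ℝ) :=
    tsum_congr fun k => by rw [mul_div_assoc, hchoose k]
  rw [hts, one_div, inv_mul_cancel_left₀ h2piIne, Complex.ofReal_mul]
  congr 1
  push_cast
  ring
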